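/- arXiv:2403.13471 — 3 statements merged into one kernel-verified Lean document; each statement's English description precedes it below -/
import Mathlib

section
/- Under the assumptions that X_{p,2} = C₂⁻¹Y_p − C₂⁻¹C₁X_{p,1}, X_{f,2} = C₂⁻¹Y_f − C₂⁻¹C₁X_{f,1}, and C₂ invertible, the inclusion ker([U_p; Y_p; Y_f; X_p]) ⊆ ker(X_f) holds if and only if ker([U_p; Y_p; Y_f; X_{p,1}]) ⊆ ker(X_{f,1}), where X_p = [X_{p,1}; X_{p,2}] and X_f = [X_{f,1}; X_{f,2}]. -/
open Matrix

lemma fromRows_mulVec_zero {R : Type*} [CommRing R] {m₁ m₂ n : Type*} [Fintype n]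
    (A : Matrix m₁ n R) (B : Matrix m₂ n R) (v : n → R) :
    Matrix.fromRows A B *ᵥ v = 0 ↔ A *ᵥ v = 0 ∧ B *ᵥ v = 0 := by
  rw [Matrix.fromRows_mulVec]
  constructor
  · intro h
    constructor <;> ext i
    · exact congrFun h (Sum.inl i)
    · exact congrFun h (Sum.inr i)
  · rintro ⟨h1, h2⟩
    ext (i | i)
    · exact congrFun h1 i
    · exact congrFun h2 i

theorem stmt_9 (m p r N : ℕ)
    (Up : Matrix (Fin m) (Fin N) ℝ) (Yp Yf : Matrix (Fin p) (Fin N) ℝ)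
    (Xp1 Xf1 : Matrix (Fin r) (Fin N) ℝ) (Xp2 Xf2 : Matrix (Fin p) (Fin N) ℝ)
    (C₁ : Matrix (Fin p) (Fin r) ℝ) (C₂ : Matrix (Fin p) (Fin p) ℝ)
    (hC₂ : IsUnit C₂.det)
    (hXp2 : Xp2 = C₂⁻¹ * Yp - C₂⁻¹ * C₁ * Xp1)
    (hXf2 : Xf2 = C₂⁻¹ * Yf - C₂⁻¹ * C₁ * Xf1) :
    (∀ v : Fin N → ℝ,
      (Matrix.fromRows Up (Matrix.fromRows Yp (Matrix.fromRows Yf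
        (Matrix.fromRows Xp1 Xp2)))) *ᵥ v = 0 →
        (Matrix.fromRows Xf1 Xf2) *ᵥ v = 0)
    ↔
    (∀ v : Fin N → ℝ,
      (Matrix.fromRows Up (Matrix.fromRows Yp (Matrix.fromRows Yf Xp1))) *ᵥ v = 0 →
        Xf1 *ᵥ v = 0) := by
  simp only [fromRows_mulVec_zero]
  constructor
  · intro h v hv
    obtain ⟨h1, h2, h3, h4⟩ := hv
    have hXp2v : Xp2 *ᵥ v = 0 := by
      simp [hXp2, Matrix.sub_mulVec, ← Matrix.mulVec_mulVec, h2, h4]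
    exact (h v ⟨h1, h2, h3, h4, hXp2v⟩).1
  · intro h v hv
    obtain ⟨h1, h2, h3, h4, h5⟩ := hv
    have hf1 : Xf1 *ᵥ v = 0 := h v ⟨h1, h2, h3, h4⟩
    refine ⟨hf1, ?_⟩
    simp [hXf2, Matrix.sub_mulVec, ← Matrix.mulVec_mulVec, h3, hf1]
end

section
/- Let the observer be z(t+1) = A_U z(t) + B_U^u u(t) + B_U^y y(t), x̂₁(t) = z(t) + D_U y(t), for the system x₁(t+1) = (A₁₁ − A₁₂C₂⁻¹C₁)x₁(t) + A₁₂C₂⁻¹y(t) + B₁u(t) + E₁d(t), x₂(t+1) = A₂₁x₁(t)+A₂₂x₂(t)+B₂u(t)+E₂d(t), y(t) = C₁x₁(t)+C₂x₂(t). If the four matrix conditions hold: (i) A_U = (I − D_U C₁)(A₁₁ − A₁₂C₂⁻¹C₁) − D_U C₂(A₂₁ − A₂₂C₂⁻¹C₁); (ii) B_U^u = (I − D_U C₁)B₁ − D_U C₂ B₂; (iii) B_U^y = A_U D_U + (I − D_U C₁)A₁₂C₂⁻¹ − D_U C₂ A₂₂ C₂⁻¹; (iv) (I − D_U C₁)E₁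 = D_U C₂ E₂; then the error e₁(t) = x₁(t) − x̂₁(t) satisfies e₁(t+1) = A_U e₁(t) for every trajectory and every input and disturbance. -/
open Matrix

set_option maxHeartbeats 1000000

theorem stmt_12 (r p m q : ℕ)
    (A₁₁ : Matrix (Fin r) (Fin r) ℝ) (A₁₂ : Matrix (Fin r) (Fin p) ℝ)
    (A₂₁ : Matrix (Fin p) (Fin r) ℝ) (A₂₂ : Matrix (Fin p) (Fin p) ℝ)
    (B₁ : Matrix (Fin r) (Fin m) ℝ) (B₂ : Matrix (Fin p) (Fin m) ℝ)
    (E₁ : Matrix (Fin r) (Fin q) ℝ) (E₂ : Matrix (Fin p) (Fin q) ℝ)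
    (C₁ : Matrix (Fin p) (Fin r) ℝ) (C₂ : Matrix (Fin p) (Fin p) ℝ)
    (hC₂ : IsUnit C₂.det)
    (AU : Matrix (Fin r) (Fin r) ℝ) (BUu : Matrix (Fin r) (Fin m) ℝ)
    (BUy DU : Matrix (Fin r) (Fin p) ℝ)
    -- conditions (i)-(iv)
    (hi : AU = (1 - DU * C₁) * (A₁₁ - A₁₂ * C₂⁻¹ * C₁)
              - DU * C₂ * (A₂₁ - A₂₂ * C₂⁻¹ * C₁))
    (hii : BUu = (1 - DU * C₁) * B₁ - DU * C₂ * B₂)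
    (hiii : BUy = AU * DU + (1 - DU * C₁) * A₁₂ * C₂⁻¹ - DU * C₂ * A₂₂ * C₂⁻¹)
    (hiv : (1 - DU * C₁) * E₁ = DU * C₂ * E₂)
    -- signals
    (x₁ : ℕ → Fin r → ℝ) (x₂ : ℕ → Fin p → ℝ)
    (u : ℕ → Fin m → ℝ) (d : ℕ → Fin q → ℝ) (y : ℕ → Fin p → ℝ)
    (z : ℕ → Fin r → ℝ) (xhat₁ : ℕ → Fin r → ℝ)
    (hy : ∀ t, y t = C₁ *ᵥ x₁ t + C₂ *ᵥ x₂ t)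
    (hx₁ : ∀ t, x₁ (t + 1)
      = (A₁₁ - A₁₂ * C₂⁻¹ * C₁) *ᵥ x₁ t + (A₁₂ * C₂⁻¹) *ᵥ y t
        + B₁ *ᵥ u t + E₁ *ᵥ d t)
    (hx₂ : ∀ t, x₂ (t + 1)
      = A₂₁ *ᵥ x₁ t + A₂₂ *ᵥ x₂ t + B₂ *ᵥ u t + E₂ *ᵥ d t)
    (hz : ∀ t, z (t + 1) = AU *ᵥ z t + BUu *ᵥ u t + BUy *ᵥ y t)
    (hxhat₁ : ∀ t, xhat₁ t = z t + DU *ᵥ y t) :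
    ∀ t, x₁ (t + 1) - xhat₁ (t + 1) = AU *ᵥ (x₁ t - xhat₁ t) := by
  intro t
  have hC' : C₂⁻¹ * C₂ = 1 := nonsing_inv_mul _ hC₂
  have h1 : x₁ (t + 1) = A₁₁ *ᵥ x₁ t + A₁₂ *ᵥ x₂ t + B₁ *ᵥ u t + E₁ *ᵥ d t := by
    rw [hx₁, hy]
    simp only [mulVec_add, sub_mulVec, mulVec_mulVec, Matrix.mul_assoc, hC', Matrix.mul_one]
    abel
  have K1 : A₁₁ - DU * (C₁ * A₁₁) - DU * (C₂ * A₂₁) - BUy * C₁ = AU - AU * (DU * C₁) := by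
    rw [hiii, hi]
    simp only [Matrix.sub_mul, Matrix.mul_sub, Matrix.add_mul, Matrix.mul_add, Matrix.one_mul,
      Matrix.mul_one, Matrix.mul_assoc, hC']
    abel
  have K2 : A₁₂ - DU * (C₁ * A₁₂) - DU * (C₂ * A₂₂) - BUy * C₂ = -(AU * (DU * C₂)) := by
    rw [hiii]
    simp only [Matrix.sub_mul, Matrix.mul_sub, Matrix.add_mul, Matrix.mul_add, Matrix.one_mul,
      Matrix.mul_one, Matrix.mul_assoc, hC']
    abel
  have K3 : B₁ - DU * (C₁ * B₁) - DU * (C₂ * B₂) - BUu = 0 := by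
    rw [hii]
    simp only [Matrix.sub_mul, Matrix.mul_sub, Matrix.add_mul, Matrix.mul_add, Matrix.one_mul,
      Matrix.mul_one, Matrix.mul_assoc, hC']
    abel
  have K4 : E₁ - DU * (C₁ * E₁) - DU * (C₂ * E₂) = (0 : Matrix (Fin r) (Fin q) ℝ) := by
    have hiv2 := hiv
    rw [Matrix.sub_mul, Matrix.one_mul, Matrix.mul_assoc, Matrix.mul_assoc] at hiv2
    rw [hiv2, sub_self]
  have lhs_eq : x₁ (t + 1) - xhat₁ (t + 1)
      = (A₁₁ - DU * (C₁ * A₁₁) - DU * (C₂ * A₂₁) - BUy * C₁) *ᵥ x₁ t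
        + (A₁₂ - DU * (C₁ * A₁₂) - DU * (C₂ * A₂₂) - BUy * C₂) *ᵥ x₂ t
        + (B₁ - DU * (C₁ * B₁) - DU * (C₂ * B₂) - BUu) *ᵥ u t
        + (E₁ - DU * (C₁ * E₁) - DU * (C₂ * E₂)) *ᵥ d t
        - AU *ᵥ z t := by
    rw [hxhat₁, hz, hy, hy]
    rw [h1, hx₂]
    simp only [mulVec_add, mulVec_sub, sub_mulVec, add_mulVec, mulVec_mulVec]
    abel
  have rhs_eq : AU *ᵥ (x₁ t - xhat₁ t)
      = (AU - AU * (DU * C₁)) *ᵥ x₁ t + (-(AU * (DU * C₂))) *ᵥ x₂ t - AU *ᵥ z t := by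
    rw [hxhat₁, hy]
    simp only [mulVec_add, mulVec_sub, sub_mulVec, neg_mulVec, mulVec_mulVec, Matrix.mul_assoc]
    abel
  rw [lhs_eq, rhs_eq, K1, K2, K3, K4]
  simp only [zero_mulVec]
  abel
end

section
/- Under conditions (i)–(iv) of the observer design, if additionally A_U is Schur stable and the observer is initialized with z(0) = x₁(0) − D_U y(0), then e₁(t) = 0 for all t ≥ 0, and consequently x̂₁(t) = x₁(t) and x̂₂(t) := −C₂⁻¹C₁z(t) + (C₂⁻¹ − C₂⁻¹C₁D_U)y(t) equals x₂(t) for all t ≥ 0 (the observer is an acceptor). -/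
open Matrix

theorem stmt_13 (r p m q : ℕ)
    (A₁₁ : Matrix (Fin r) (Fin r) ℝ) (A₁₂ : Matrix (Fin r) (Fin p) ℝ)
    (A₂₁ : Matrix (Fin p) (Fin r) ℝ) (A₂₂ : Matrix (Fin p) (Fin p) ℝ)
    (B₁ : Matrix (Fin r) (Fin m) ℝ) (B₂ : Matrix (Fin p) (Fin m) ℝ)
    (E₁ : Matrix (Fin r) (Fin q) ℝ) (E₂ : Matrix (Fin p) (Fin q) ℝ)
    (C₁ : Matrix (Fin p) (Fin r) ℝ) (C₂ : Matrix (Fin p) (Fin p) ℝ)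
    (hC₂ : IsUnit C₂.det)
    (AU : Matrix (Fin r) (Fin r) ℝ) (BUu : Matrix (Fin r) (Fin m) ℝ)
    (BUy DU : Matrix (Fin r) (Fin p) ℝ)
    -- conditions (i)-(iv)
    (hi : AU = (1 - DU * C₁) * (A₁₁ - A₁₂ * C₂⁻¹ * C₁)
              - DU * C₂ * (A₂₁ - A₂₂ * C₂⁻¹ * C₁))
    (hii : BUu = (1 - DU * C₁) * B₁ - DU * C₂ * B₂)
    (hiii : BUy = AU * DU + (1 - DU * C₁) * A₁₂ * C₂⁻¹ - DU * C₂ * A₂₂ * C₂⁻¹)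
    (hiv : (1 - DU * C₁) * E₁ = DU * C₂ * E₂)
    -- Schur stability of the observer matrix
    (hschur : ∀ μ ∈ spectrum ℂ (AU.map (Complex.ofReal)), ‖μ‖ < 1)
    -- signals
    (x₁ : ℕ → Fin r → ℝ) (x₂ : ℕ → Fin p → ℝ)
    (u : ℕ → Fin m → ℝ) (d : ℕ → Fin q → ℝ) (y : ℕ → Fin p → ℝ)
    (z : ℕ → Fin r → ℝ) (xhat₁ : ℕ → Fin r → ℝ) (xhat₂ : ℕ → Fin p → ℝ)
    (hy : ∀ t, y t = C₁ *ᵥ x₁ t + C₂ *ᵥ x₂ t)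
    (hx₁ : ∀ t, x₁ (t + 1)
      = (A₁₁ - A₁₂ * C₂⁻¹ * C₁) *ᵥ x₁ t + (A₁₂ * C₂⁻¹) *ᵥ y t
        + B₁ *ᵥ u t + E₁ *ᵥ d t)
    (hx₂ : ∀ t, x₂ (t + 1)
      = A₂₁ *ᵥ x₁ t + A₂₂ *ᵥ x₂ t + B₂ *ᵥ u t + E₂ *ᵥ d t)
    (hz : ∀ t, z (t + 1) = AU *ᵥ z t + BUu *ᵥ u t + BUy *ᵥ y t)
    (hxhat₁ : ∀ t, xhat₁ t = z t + DU *ᵥ y t)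
    (hxhat₂ : ∀ t, xhat₂ t = (-(C₂⁻¹ * C₁)) *ᵥ z t
      + (C₂⁻¹ - C₂⁻¹ * C₁ * DU) *ᵥ y t)
    -- exact initialization
    (hinit : z 0 = x₁ 0 - DU *ᵥ y 0) :
    ∀ t, x₁ t - xhat₁ t = 0 ∧ xhat₁ t = x₁ t ∧ xhat₂ t = x₂ t := by
  -- x₂ in terms of y and x₁
  have hC : C₂⁻¹ * C₂ = 1 := Matrix.nonsing_inv_mul C₂ hC₂
  have hx₂t : ∀ t, x₂ t = C₂⁻¹ *ᵥ y t - (C₂⁻¹ * C₁) *ᵥ x₁ t := by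
    intro t
    have h := congrArg (fun v => C₂⁻¹ *ᵥ v) (hy t)
    simp only [Matrix.mulVec_add, Matrix.mulVec_mulVec, hC, Matrix.one_mulVec] at h
    rw [h]; abel
  have hivv : ∀ v, E₁ *ᵥ v - DU *ᵥ (C₁ *ᵥ (E₁ *ᵥ v)) = DU *ᵥ (C₂ *ᵥ (E₂ *ᵥ v)) := by
    intro v
    have h := congrArg (fun M => M *ᵥ v) hiv
    simpa [Matrix.sub_mulVec, Matrix.one_mulVec, ← Matrix.mulVec_mulVec] using h
  have key : ∀ t, z t = x₁ t - DU *ᵥ y t := by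
    intro t
    induction t with
    | zero => exact hinit
    | succ t ih =>
      rw [hz t, ih, hx₁ t, hy (t + 1), hx₁ t, hx₂ t, hx₂t t, hiii, hi, hii]
      have hd := hivv (d t)
      simp only [Matrix.sub_mulVec, Matrix.add_mulVec, Matrix.neg_mulVec,
        Matrix.one_mulVec, ← Matrix.mulVec_mulVec, Matrix.mulVec_add, Matrix.mulVec_sub,
        Matrix.mulVec_neg]
      rw [← hd]
      abel
  intro t
  have h1 : xhat₁ t = x₁ t := by
    rw [hxhat₁ t, key t]; abel
  refine ⟨by rw [h1]; abel, h1, ?_⟩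
  rw [hxhat₂ t, key t, hx₂t t]
  simp only [Matrix.sub_mulVec, Matrix.neg_mulVec, Matrix.one_mulVec,
    ← Matrix.mulVec_mulVec, Matrix.mulVec_add, Matrix.mulVec_sub, Matrix.mulVec_neg]
  abel
end
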